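/- If M is a consistent positive n×n matrix and w is the positive vector given by w_i = M_i0, then for any vector v with M.mulVec v = n • v, v is a scalar multiple of w. -/

import Mathlib

/-! A consistent matrix has rank one: `M i j = M i k * M k j` says `M = vecMulVec (M · k) (M k)`.
So `M *ᵥ v` is always a multiple of the column `M · k`, and an eigenvector for a nonzero
eigenvalue such as `n` must be one too. -/

namespace Matrix

variable {ι K : Type*}

theorem eq_vecMulVec_of_consistent [Mul K] {M : Matrix ι ι K}
    (hcons : ∀ i j k, M i j = M i k * M k j) (k : ι) : M = vecMulVec (fun i => M i k) (M k) := by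
  ext i j
  rw [vecMulVec_apply, ← hcons]

theorem exists_eq_smul_of_vecMulVec_mulVec_eq_smul [Fintype ι] [Field K]
    {u r v : ι → K} {μ : K} (hμ : μ ≠ 0) (hv : vecMulVec u r *ᵥ v = μ • v) :
    ∃ c : K, v = c • u := by
  refine ⟨μ⁻¹ * (r ⬝ᵥ v), ?_⟩
  rw [vecMulVec_mulVec, op_smul_eq_smul] at hv
  rw [mul_smul, hv, inv_smul_smul₀ hμ]

end Matrix

theorem stmt15_general (n : ℕ) (hn : 0 < n) (M : Matrix (Fin n) (Fin n) ℝ)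
    (hcons : ∀ i j k, M i j = M i k * M k j)
    (w : Fin n → ℝ) (hw : ∀ i, w i = M i ⟨0, hn⟩) :
    ∀ v : Fin n → ℝ, M.mulVec v = (n : ℝ) • v → ∃ c : ℝ, v = c • w := by
  intro v hv
  rw [Matrix.eq_vecMulVec_of_consistent hcons ⟨0, hn⟩, ← funext hw] at hv
  exact Matrix.exists_eq_smul_of_vecMulVec_mulVec_eq_smul (Nat.cast_ne_zero.mpr hn.ne') hv

theorem stmt15 (n : ℕ) (hn : 0 < n) (M : Matrix (Fin n) (Fin n) ℝ)
    (hpos : ∀ i j, 0 < M i j) (hcons : ∀ i j k, M i j = M i k * M k j)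
    (w : Fin n → ℝ) (hw : ∀ i, w i = M i ⟨0, hn⟩) :
    ∀ v : Fin n → ℝ, M.mulVec v = (n : ℝ) • v → ∃ c : ℝ, v = c • w :=
  stmt15_general n hn M hcons w hw
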